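/- The SNF encodings imply the formulae they encode: for all PLTL formulae A, proposition symbols x, y and literals l, m, the following implications are valid: (i) (□(x ⇒ A) ∧ □(x ⇒ y) ∧ □(y ⇒ ◯A) ∧ □(y ⇒ ◯y)) ⇒ □(x ⇒ □A); (ii) (□(x ⇒ ◇m) ∧ □(x ⇒ (l ∨ m)) ∧ □(x ⇒ (y ∨ m)) ∧ □(y ⇒ ◯(l ∨ m)) ∧ □(y ⇒ ◯(y ∨ m))) ⇒ □(x ⇒ (l U m)); and (iii) (□(x ⇒ (l ∨ m)) ∧ □(x ⇒ (y ∨ m)) ∧ □(y ⇒ ◯(l ∨ m)) ∧ □(y ⇒ ◯(y ∨ m))) ⇒ □(x ⇒ (l W m)). -/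

import Mathlib

/-- Syntax of Propositional Linear Temporal Logic over proposition symbols `P`. -/
inductive PLTL (P : Type) : Type
  | tru : PLTL P
  | fls : PLTL P
  | start : PLTL P
  | atom : P → PLTL P
  | neg : PLTL P → PLTL P
  | conj : PLTL P → PLTL P → PLTL P
  | disj : PLTL P → PLTL P → PLTL P
  | impl : PLTL P → PLTL P → PLTL P
  | next : PLTL P → PLTL P
  | evtl : PLTL P → PLTL P
  | alw : PLTL P → PLTL P
  | untl : PLTL P → PLTL P → PLTL P
  | unls : PLTL P → PLTL P → PLTL P

namespace PLTL

/-- Satisfaction `(σ, i) ⊨ A` of a PLTL formula in a model `σ : ℕ → Set P` at index `i`. -/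
def Sat {P : Type} (σ : ℕ → Set P) : PLTL P → ℕ → Prop
  | tru, _ => True
  | fls, _ => False
  | start, i => i = 0
  | atom p, i => p ∈ σ i
  | neg A, i => ¬ Sat σ A i
  | conj A B, i => Sat σ A i ∧ Sat σ B i
  | disj A B, i => Sat σ A i ∨ Sat σ B i
  | impl A B, i => Sat σ A i → Sat σ B i
  | next A, i => Sat σ A (i + 1)
  | evtl A, i => ∃ k, i ≤ k ∧ Sat σ A k
  | alw A, i => ∀ j, i ≤ j → Sat σ A j
  | untl A B, i => ∃ k, i ≤ k ∧ Sat σ B k ∧ ∀ j, i ≤ j → j < k → Sat σ A j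
  | unls A B, i =>
      (∃ k, i ≤ k ∧ Sat σ B k ∧ ∀ j, i ≤ j → j < k → Sat σ A j) ∨ (∀ j, i ≤ j → Sat σ A j)

/-- A formula is valid iff it is satisfied at index 0 of every model. -/
def Valid {P : Type} (A : PLTL P) : Prop := ∀ σ : ℕ → Set P, Sat σ A 0

/-- A formula with no temporal connectives is propositionally valid iff
it is satisfied at every index of every model. -/
def PropValid {P : Type} (A : PLTL P) : Prop := ∀ (σ : ℕ → Set P) (i : ℕ), Sat σ A i

/-- A literal is a proposition symbol or a negated proposition symbol. -/
def IsLiteral {P : Type} : PLTL P → Prop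
  | atom _ => True
  | neg (atom _) => True
  | _ => False

/-- A conjunction of literals. -/
def IsConjLits {P : Type} : PLTL P → Prop
  | atom _ => True
  | neg (atom _) => True
  | conj A B => IsConjLits A ∧ IsConjLits B
  | _ => False

/-- Biconditional `A ⇔ B` as an abbreviation. -/
def piff {P : Type} (A B : PLTL P) : PLTL P := conj (impl A B) (impl B A)

/-- Finite disjunction. -/
def bigOr {P : Type} (l : List (PLTL P)) : PLTL P := l.foldr disj fls

/-- Finite conjunction. -/
def bigAnd {P : Type} (l : List (PLTL P)) : PLTL P := l.foldr conj tru

/-- The proposition symbols occurring in a formula. -/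
def syms {P : Type} : PLTL P → Set P
  | tru => ∅
  | fls => ∅
  | start => ∅
  | atom p => {p}
  | neg A => syms A
  | conj A B => syms A ∪ syms B
  | disj A B => syms A ∪ syms B
  | impl A B => syms A ∪ syms B
  | next A => syms A
  | evtl A => syms A
  | alw A => syms A
  | untl A B => syms A ∪ syms B
  | unls A B => syms A ∪ syms B

end PLTL

/-!
Once `y` holds it persists and forces `A` one step later, which gives `□A` after every `x`.
For `U` and `W`: as long as `m` has not occurred, `y ∨ m` (hence `y`) propagates, and with it
`l ∨ m` (hence `l`). So `l` holds up to the first `m` if there is one, and forever otherwise;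
this is `l W m`, and `l W m` together with `◇m` is `l U m`.
-/

namespace PLTL

variable {P : Type} {σ : ℕ → Set P}

theorem Sat.of_alw_impl {A B : PLTL P} (h : Sat σ (alw (impl A B)) 0) (j : ℕ) :
    Sat σ A j → Sat σ B j :=
  h j j.zero_le

theorem sat_alw_of_step {A Y : PLTL P} {i : ℕ} (hA : Sat σ A i) (hY : Sat σ Y i)
    (hYA : ∀ j, Sat σ Y j → Sat σ A (j + 1)) (hYY : ∀ j, Sat σ Y j → Sat σ Y (j + 1)) :
    Sat σ (alw A) i := by
  have hY_from : ∀ j, i ≤ j → Sat σ Y j := fun j hij =>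
    Nat.le_induction hY (fun j _ => hYY j) j hij
  intro j hij
  rcases hij.eq_or_lt with rfl | hlt
  · exact hA
  · obtain ⟨k, hik, rfl⟩ : ∃ k, i ≤ k ∧ j = k + 1 := ⟨j - 1, by omega, by omega⟩
    exact hYA k (hY_from k hik)

theorem sat_unls_of_forall_not_sat_le {A B : PLTL P} {i : ℕ}
    (h : ∀ j, i ≤ j → (∀ k, i ≤ k → k ≤ j → ¬ Sat σ B k) → Sat σ A j) :
    Sat σ (unls A B) i := by
  classical
  by_cases hB : ∃ k, i ≤ k ∧ Sat σ B k
  · obtain ⟨hik, hBk⟩ := Nat.find_spec hB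
    refine Or.inl ⟨Nat.find hB, hik, hBk, fun j hij hjk => h j hij fun k hik hkj hBk' => ?_⟩
    exact Nat.find_min hB (hkj.trans_lt hjk) ⟨hik, hBk'⟩
  · exact Or.inr fun j hij => h j hij fun k hik _ hBk => hB ⟨k, hik, hBk⟩

theorem sat_untl_of_unls {A B : PLTL P} {i : ℕ} (hW : Sat σ (unls A B) i)
    (hB : Sat σ (evtl B) i) : Sat σ (untl A B) i := by
  rcases hW with hU | hA
  · exact hU
  · obtain ⟨k, hik, hBk⟩ := hB
    exact ⟨k, hik, hBk, fun j hij _ => hA j hij⟩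

section SNFStep

variable {L M Y : PLTL P} {i : ℕ} (hL : Sat σ (disj L M) i) (hY : Sat σ (disj Y M) i)
  (hYL : ∀ j, Sat σ Y j → Sat σ (disj L M) (j + 1))
  (hYY : ∀ j, Sat σ Y j → Sat σ (disj Y M) (j + 1))
include hL hY hYL hYY

theorem sat_disj_of_not_sat_before :
    ∀ j, i ≤ j → (∀ k, i ≤ k → k < j → ¬ Sat σ M k) →
      Sat σ (disj L M) j ∧ Sat σ (disj Y M) j := by
  intro j hij
  induction j, hij using Nat.le_induction with
  | base => exact fun _ => ⟨hL, hY⟩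
  | succ j hij ih =>
    intro hM
    obtain ⟨-, hYj | hMj⟩ := ih fun k hik hkj => hM k hik (hkj.trans j.lt_succ_self)
    · exact ⟨hYL j hYj, hYY j hYj⟩
    · exact absurd hMj (hM j hij j.lt_succ_self)

theorem sat_unls_of_snf_step : Sat σ (unls L M) i := by
  refine sat_unls_of_forall_not_sat_le fun j hij hM => ?_
  obtain hLj | hMj :=
    (sat_disj_of_not_sat_before hL hY hYL hYY j hij fun k hik hkj => hM k hik hkj.le).1
  · exact hLj
  · exact absurd hMj (hM j hij le_rfl)

end SNFStep

end PLTL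

open PLTL in
theorem stmt_19_general {P : Type} (A : PLTL P) (x y : P) (l m : PLTL P) :
    Valid (impl
      (conj (conj (alw (impl (atom x) A)) (alw (impl (atom x) (atom y))))
            (conj (alw (impl (atom y) (next A))) (alw (impl (atom y) (next (atom y))))))
      (alw (impl (atom x) (alw A)))) ∧
    Valid (impl
      (conj (alw (impl (atom x) (evtl m)))
        (conj (conj (alw (impl (atom x) (disj l m)))
                    (alw (impl (atom x) (disj (atom y) m))))
              (conj (alw (impl (atom y) (next (disj l m))))
                    (alw (impl (atom y) (next (disj (atom y) m)))))))
      (alw (impl (atom x) (untl l m)))) ∧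
    Valid (impl
      (conj (conj (alw (impl (atom x) (disj l m)))
                  (alw (impl (atom x) (disj (atom y) m))))
            (conj (alw (impl (atom y) (next (disj l m))))
                  (alw (impl (atom y) (next (disj (atom y) m))))))
      (alw (impl (atom x) (unls l m)))) := by
  refine ⟨fun σ => ?_, fun σ => ?_, fun σ => ?_⟩
  · rintro ⟨⟨hxA, hxy⟩, hyA, hyy⟩ i - hx
    exact sat_alw_of_step (hxA.of_alw_impl i hx) (hxy.of_alw_impl i hx)
      hyA.of_alw_impl hyy.of_alw_impl
  · rintro ⟨hxm, ⟨hxl, hxy⟩, hyl, hyy⟩ i - hx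
    exact sat_untl_of_unls
      (sat_unls_of_snf_step (hxl.of_alw_impl i hx) (hxy.of_alw_impl i hx)
        hyl.of_alw_impl hyy.of_alw_impl)
      (hxm.of_alw_impl i hx)
  · rintro ⟨⟨hxl, hxy⟩, hyl, hyy⟩ i - hx
    exact sat_unls_of_snf_step (hxl.of_alw_impl i hx) (hxy.of_alw_impl i hx)
      hyl.of_alw_impl hyy.of_alw_impl

open PLTL in
/-- the SNF encodings of □, U and W imply the formulae they encode. -/
theorem stmt_19 {P : Type} [Countable P] (A : PLTL P) (x y : P) (l m : PLTL P)
    (hl : IsLiteral l) (hm : IsLiteral m) :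
    Valid (impl
      (conj (conj (alw (impl (atom x) A)) (alw (impl (atom x) (atom y))))
            (conj (alw (impl (atom y) (next A))) (alw (impl (atom y) (next (atom y))))))
      (alw (impl (atom x) (alw A)))) ∧
    Valid (impl
      (conj (alw (impl (atom x) (evtl m)))
        (conj (conj (alw (impl (atom x) (disj l m)))
                    (alw (impl (atom x) (disj (atom y) m))))
              (conj (alw (impl (atom y) (next (disj l m))))
                    (alw (impl (atom y) (next (disj (atom y) m)))))))
      (alw (impl (atom x) (untl l m)))) ∧
    Valid (impl
      (conj (conj (alw (impl (atom x) (disj l m)))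
                  (alw (impl (atom x) (disj (atom y) m))))
            (conj (alw (impl (atom y) (next (disj l m))))
                  (alw (impl (atom y) (next (disj (atom y) m))))))
      (alw (impl (atom x) (unls l m)))) :=
  stmt_19_general A x y l m
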